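/- Let s, Δq : ℝ → ℝⁿ, Δθ : ℝ → ℝᵖ, ΔF : ℝ → ℝᵐ be differentiable, M : ℝ → Matrix n n ℝ differentiable with M(t) symmetric for all t, C : ℝ → Matrix n n ℝ, and let K_v, K_p, L_d, P be symmetric positive definite matrices of the appropriate sizes, λ > 0. Assume: (i) the skew-symmetry property xᵀ(M'(t) − 2C(t))x = 0 for all t and x; (ii) the closed-loop dynamics M(t)·s'(t) + C(t)·s(t) + Y(t)·Δθ(t) + K_v·Δq'(t) + K_p·Δq(t) − J(t)ᵀ·ΔF(t) = 0; (iii) the adaptive laws Δθ'(t) = L_d·Y(t)ᵀ·s(t) and ΔF'(t) = −P⁻¹·J(t)·s(t). Then the derivative of V(t) = (1/2)·sᵀM s + (1/2)·ΔθᵀL_d⁻¹Δθ + (1/2)·Δqᵀ(K_p + λK_v)Δq + (1/2)·ΔFᵀP ΔF satisfies V'(t) = −s(t)ᵀ·(K_v·Δq'(t) + K_p·Δq(t)) + Δq(t)ᵀ·(K_p + λ·K_v)·Δq'(t) for all t. -/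

import Mathlib

open Matrix Filter Topology RealInnerProductSpace

/-!
Each term of `V` is a quadratic form, so the product rule and the symmetry of its weight
matrix give `d/dt (½ xᵀBx) = xᵀBx'`, plus `½ sᵀṀs` for the time-varying inertia `M`.
Skew-symmetry turns `½ sᵀṀs` into `sᵀCs`, which the closed loop cancels when it is used to
rewrite `sᵀMs'`; the adaptive laws turn `Δθᵀ L_d⁻¹ Δθ'` into `sᵀYΔθ` and `ΔFᵀPΔF'` into
`-sᵀJᵀΔF`, cancelling the remaining regressor and contact-force terms.
-/

section

variable {m n : ℕ}

theorem hasDerivAt_toLp_mulVec {A : ℝ → Matrix (Fin m) (Fin n) ℝ} {A' : Matrix (Fin m) (Fin n) ℝ}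
    {y : ℝ → EuclideanSpace ℝ (Fin n)} {y' : EuclideanSpace ℝ (Fin n)} {t : ℝ}
    (hA : ∀ i j, HasDerivAt (fun τ => A τ i j) (A' i j) t) (hy : HasDerivAt y y' t) :
    HasDerivAt (fun τ => WithLp.toLp 2 (A τ *ᵥ y τ))
      (WithLp.toLp 2 (A' *ᵥ y t + A t *ᵥ y')) t := by
  have hcoord : ∀ j, HasDerivAt (fun τ => y τ j) (y' j) t := fun j =>
    (PiLp.hasFDerivAt_apply 2 (y t) j).comp_hasDerivAt t hy
  have hpi : HasDerivAt (fun τ => A τ *ᵥ y τ) (A' *ᵥ y t + A t *ᵥ y') t := by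
    refine hasDerivAt_pi.2 fun i => ?_
    simp only [Pi.add_apply, mulVec, dotProduct, ← Finset.sum_add_distrib]
    exact HasDerivAt.fun_sum fun j _ => (hA i j).mul (hcoord j)
  exact (PiLp.hasFDerivAt_toLp 2 _).comp_hasDerivAt t hpi

theorem inner_toLp_mulVec (A : Matrix (Fin m) (Fin n) ℝ) (x : EuclideanSpace ℝ (Fin m))
    (y : EuclideanSpace ℝ (Fin n)) :
    ⟪x, WithLp.toLp 2 (A *ᵥ y)⟫ = ⟪WithLp.toLp 2 (Aᵀ *ᵥ x), y⟫ := by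
  simp only [EuclideanSpace.inner_eq_star_dotProduct, star_trivial]
  rw [dotProduct_comm, dotProduct_mulVec, mulVec_transpose, dotProduct_comm]

theorem inner_toLp_mulVec_comm {A : Matrix (Fin n) (Fin n) ℝ} (hA : A.IsSymm)
    (x y : EuclideanSpace ℝ (Fin n)) :
    ⟪x, WithLp.toLp 2 (A *ᵥ y)⟫ = ⟪y, WithLp.toLp 2 (A *ᵥ x)⟫ := by
  rw [inner_toLp_mulVec, hA.eq, real_inner_comm]

theorem Matrix.PosDef.of_inner_toLp_mulVec_pos {A : Matrix (Fin n) (Fin n) ℝ} (hA : A.IsSymm)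
    (hpos : ∀ x : EuclideanSpace ℝ (Fin n), x ≠ 0 → 0 < ⟪x, WithLp.toLp 2 (A *ᵥ x)⟫) :
    A.PosDef :=
  .of_dotProduct_mulVec_pos (isHermitian_iff_isSymm.2 hA) fun x hx => by
    simpa [EuclideanSpace.inner_toLp_toLp, dotProduct_comm] using
      hpos (WithLp.toLp 2 x) (by simpa using hx)

theorem half_inner_toLp_mulVec_eq_of_skew {M' C : Matrix (Fin n) (Fin n) ℝ}
    {x : EuclideanSpace ℝ (Fin n)} (hskew : ⟪x, WithLp.toLp 2 ((M' - 2 • C) *ᵥ x)⟫ = 0) :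
    1 / 2 * ⟪x, WithLp.toLp 2 (M' *ᵥ x)⟫ = ⟪x, WithLp.toLp 2 (C *ᵥ x)⟫ := by
  rw [sub_mulVec, smul_mulVec, WithLp.toLp_sub, WithLp.toLp_smul, inner_sub_right,
    inner_smul_right_eq_smul, nsmul_eq_mul, Nat.cast_ofNat] at hskew
  linarith

theorem HasDerivAt.half_inner_toLp_mulVec_self {M : ℝ → Matrix (Fin n) (Fin n) ℝ}
    {M' : Matrix (Fin n) (Fin n) ℝ} {x : ℝ → EuclideanSpace ℝ (Fin n)}
    {x' : EuclideanSpace ℝ (Fin n)} {t : ℝ} (hx : HasDerivAt x x' t)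
    (hM : ∀ i j, HasDerivAt (fun τ => M τ i j) (M' i j) t) (hMt : (M t).IsSymm) :
    HasDerivAt (fun τ => 1 / 2 * ⟪x τ, WithLp.toLp 2 (M τ *ᵥ x τ)⟫)
      (1 / 2 * ⟪x t, WithLp.toLp 2 (M' *ᵥ x t)⟫ + ⟪x t, WithLp.toLp 2 (M t *ᵥ x')⟫) t := by
  refine ((hx.inner ℝ (hasDerivAt_toLp_mulVec hM hx)).const_mul (1 / 2 : ℝ)).congr_deriv ?_
  rw [WithLp.toLp_add, inner_add_right, inner_toLp_mulVec_comm hMt x']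
  ring

theorem HasDerivAt.half_inner_toLp_mulVec_self_const {B : Matrix (Fin n) (Fin n) ℝ}
    (hB : B.IsSymm) {x : ℝ → EuclideanSpace ℝ (Fin n)} {x' : EuclideanSpace ℝ (Fin n)} {t : ℝ}
    (hx : HasDerivAt x x' t) :
    HasDerivAt (fun τ => 1 / 2 * ⟪x τ, WithLp.toLp 2 (B *ᵥ x τ)⟫)
      ⟪x t, WithLp.toLp 2 (B *ᵥ x')⟫ t := by
  simpa using hx.half_inner_toLp_mulVec_self (M := fun _ => B) (M' := 0)
    (fun i j => hasDerivAt_const t (B i j)) hB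

end

theorem lyapunov_derivative_general
    (n p m : ℕ)
    (s Δq s' Δq' : ℝ → EuclideanSpace ℝ (Fin n))
    (Δθ Δθ' : ℝ → EuclideanSpace ℝ (Fin p))
    (ΔF ΔF' : ℝ → EuclideanSpace ℝ (Fin m))
    (hs : ∀ t, HasDerivAt s (s' t) t)
    (hΔq : ∀ t, HasDerivAt Δq (Δq' t) t)
    (hΔθ : ∀ t, HasDerivAt Δθ (Δθ' t) t)
    (hΔF : ∀ t, HasDerivAt ΔF (ΔF' t) t)
    (M M' C : ℝ → Matrix (Fin n) (Fin n) ℝ)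
    (hM : ∀ i j t, HasDerivAt (fun τ => M τ i j) (M' t i j) t)
    (hM_symm : ∀ t, (M t)ᵀ = M t)
    (Y : ℝ → Matrix (Fin n) (Fin p) ℝ) (J : ℝ → Matrix (Fin m) (Fin n) ℝ)
    (Kv Kp : Matrix (Fin n) (Fin n) ℝ)
    (Ld : Matrix (Fin p) (Fin p) ℝ)
    (P : Matrix (Fin m) (Fin m) ℝ)
    (lam : ℝ)
    (hKv_symm : Kvᵀ = Kv)
    (hKp_symm : Kpᵀ = Kp)
    (hLd_symm : Ldᵀ = Ld)
    (hLd_pd : ∀ x : EuclideanSpace ℝ (Fin p), x ≠ 0 → 0 < ⟪x, WithLp.toLp 2 (Ld.mulVec x)⟫)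
    (hP_symm : Pᵀ = P)
    (hP_pd : ∀ x : EuclideanSpace ℝ (Fin m), x ≠ 0 → 0 < ⟪x, WithLp.toLp 2 (P.mulVec x)⟫)
    (hskew : ∀ (t : ℝ) (x : EuclideanSpace ℝ (Fin n)),
      ⟪x, WithLp.toLp 2 ((M' t - 2 • C t).mulVec x)⟫ = 0)
    (hclosed : ∀ t,
      (M t).mulVec (s' t) + (C t).mulVec (s t) + (Y t).mulVec (Δθ t)
        + Kv.mulVec (Δq' t) + Kp.mulVec (Δq t) - (J t)ᵀ.mulVec (ΔF t) = 0)
    (hθ_law : ∀ t, Δθ' t = Ld.mulVec ((Y t)ᵀ.mulVec (s t)))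
    (hF_law : ∀ t, ΔF' t = -(P⁻¹.mulVec ((J t).mulVec (s t))))
    (V : ℝ → ℝ)
    (hV : ∀ t, V t =
      (1 / 2) * ⟪s t, WithLp.toLp 2 ((M t).mulVec (s t))⟫
        + (1 / 2) * ⟪Δθ t, WithLp.toLp 2 ((Ld⁻¹).mulVec (Δθ t))⟫
        + (1 / 2) * ⟪Δq t, WithLp.toLp 2 ((Kp + lam • Kv).mulVec (Δq t))⟫
        + (1 / 2) * ⟪ΔF t, WithLp.toLp 2 (P.mulVec (ΔF t))⟫) :
    ∀ t, HasDerivAt V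
      (-⟪s t, WithLp.toLp 2 (Kv.mulVec (Δq' t) + Kp.mulVec (Δq t))⟫
        + ⟪Δq t, WithLp.toLp 2 ((Kp + lam • Kv).mulVec (Δq' t))⟫) t := by
  intro t
  have hLd_det : IsUnit Ld.det :=
    (isUnit_iff_isUnit_det _).1 (PosDef.of_inner_toLp_mulVec_pos hLd_symm hLd_pd).isUnit
  have hP_det : IsUnit P.det :=
    (isUnit_iff_isUnit_det _).1 (PosDef.of_inner_toLp_mulVec_pos hP_symm hP_pd).isUnit
  have hK : (Kp + lam • Kv).IsSymm := IsSymm.add hKp_symm (IsSymm.smul hKv_symm lam)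
  have hLdinv : (Ld⁻¹).IsSymm := by
    rw [IsSymm, transpose_nonsing_inv, hLd_symm]
  rw [funext hV]
  refine ((((hs t).half_inner_toLp_mulVec_self (hM · · t) (hM_symm t)).add
    ((hΔθ t).half_inner_toLp_mulVec_self_const hLdinv)).add
    ((hΔq t).half_inner_toLp_mulVec_self_const hK)).add
    ((hΔF t).half_inner_toLp_mulVec_self_const hP_symm) |>.congr_deriv ?_
  have hkinetic := half_inner_toLp_mulVec_eq_of_skew (hskew t (s t))
  have hMs' : M t *ᵥ s' t = (J t)ᵀ *ᵥ ΔF t - C t *ᵥ s t - Y t *ᵥ Δθ t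
      - (Kv *ᵥ Δq' t + Kp *ᵥ Δq t) := by
    linear_combination (norm := abel) hclosed t
  have hθ : ⟪Δθ t, WithLp.toLp 2 (Ld⁻¹ *ᵥ Δθ' t)⟫ = ⟪s t, WithLp.toLp 2 (Y t *ᵥ Δθ t)⟫ := by
    rw [hθ_law t, mulVec_mulVec, nonsing_inv_mul _ hLd_det,
      one_mulVec, inner_toLp_mulVec, transpose_transpose, real_inner_comm]
  have hF : ⟪ΔF t, WithLp.toLp 2 (P *ᵥ ΔF' t)⟫ = -⟪s t, WithLp.toLp 2 ((J t)ᵀ *ᵥ ΔF t)⟫ := by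
    rw [hF_law t, mulVec_neg, mulVec_mulVec, mul_nonsing_inv _ hP_det,
      one_mulVec, WithLp.toLp_neg, inner_neg_right, inner_toLp_mulVec, real_inner_comm]
  rw [hMs', WithLp.toLp_sub, WithLp.toLp_sub, WithLp.toLp_sub, inner_sub_right, inner_sub_right,
    inner_sub_right, hθ, hF]
  linarith

/-- Equation (4-13): along the closed-loop trajectories, using skew-symmetry of `Ṁ - 2C`
and the adaptive laws, the derivative of the Lyapunov function is
`V' = -sᵀ(K_v Δq' + K_p Δq) + Δqᵀ(K_p + λ K_v) Δq'`. -/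
theorem lyapunov_derivative
    (n p m : ℕ)
    (s Δq s' Δq' : ℝ → EuclideanSpace ℝ (Fin n))
    (Δθ Δθ' : ℝ → EuclideanSpace ℝ (Fin p))
    (ΔF ΔF' : ℝ → EuclideanSpace ℝ (Fin m))
    (hs : ∀ t, HasDerivAt s (s' t) t)
    (hΔq : ∀ t, HasDerivAt Δq (Δq' t) t)
    (hΔθ : ∀ t, HasDerivAt Δθ (Δθ' t) t)
    (hΔF : ∀ t, HasDerivAt ΔF (ΔF' t) t)
    (M M' C : ℝ → Matrix (Fin n) (Fin n) ℝ)
    (hM : ∀ i j t, HasDerivAt (fun τ => M τ i j) (M' t i j) t)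
    (hM_symm : ∀ t, (M t)ᵀ = M t)
    (Y : ℝ → Matrix (Fin n) (Fin p) ℝ) (J : ℝ → Matrix (Fin m) (Fin n) ℝ)
    (hY_cont : ∀ i j, Continuous fun t => Y t i j)
    (hJ_cont : ∀ i j, Continuous fun t => J t i j)
    (Kv Kp : Matrix (Fin n) (Fin n) ℝ)
    (Ld : Matrix (Fin p) (Fin p) ℝ)
    (P : Matrix (Fin m) (Fin m) ℝ)
    (lam : ℝ) (hlam : 0 < lam)
    (hKv_symm : Kvᵀ = Kv)
    (hKv_pd : ∀ x : EuclideanSpace ℝ (Fin n), x ≠ 0 → 0 < ⟪x, WithLp.toLp 2 (Kv.mulVec x)⟫)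
    (hKp_symm : Kpᵀ = Kp)
    (hKp_pd : ∀ x : EuclideanSpace ℝ (Fin n), x ≠ 0 → 0 < ⟪x, WithLp.toLp 2 (Kp.mulVec x)⟫)
    (hLd_symm : Ldᵀ = Ld)
    (hLd_pd : ∀ x : EuclideanSpace ℝ (Fin p), x ≠ 0 → 0 < ⟪x, WithLp.toLp 2 (Ld.mulVec x)⟫)
    (hP_symm : Pᵀ = P)
    (hP_pd : ∀ x : EuclideanSpace ℝ (Fin m), x ≠ 0 → 0 < ⟪x, WithLp.toLp 2 (P.mulVec x)⟫)
    (hskew : ∀ (t : ℝ) (x : EuclideanSpace ℝ (Fin n)),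
      ⟪x, WithLp.toLp 2 ((M' t - 2 • C t).mulVec x)⟫ = 0)
    (hclosed : ∀ t,
      (M t).mulVec (s' t) + (C t).mulVec (s t) + (Y t).mulVec (Δθ t)
        + Kv.mulVec (Δq' t) + Kp.mulVec (Δq t) - (J t)ᵀ.mulVec (ΔF t) = 0)
    (hθ_law : ∀ t, Δθ' t = Ld.mulVec ((Y t)ᵀ.mulVec (s t)))
    (hF_law : ∀ t, ΔF' t = -(P⁻¹.mulVec ((J t).mulVec (s t))))
    (V : ℝ → ℝ)
    (hV : ∀ t, V t =
      (1 / 2) * ⟪s t, WithLp.toLp 2 ((M t).mulVec (s t))⟫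
        + (1 / 2) * ⟪Δθ t, WithLp.toLp 2 ((Ld⁻¹).mulVec (Δθ t))⟫
        + (1 / 2) * ⟪Δq t, WithLp.toLp 2 ((Kp + lam • Kv).mulVec (Δq t))⟫
        + (1 / 2) * ⟪ΔF t, WithLp.toLp 2 (P.mulVec (ΔF t))⟫) :
    ∀ t, HasDerivAt V
      (-⟪s t, WithLp.toLp 2 (Kv.mulVec (Δq' t) + Kp.mulVec (Δq t))⟫
        + ⟪Δq t, WithLp.toLp 2 ((Kp + lam • Kv).mulVec (Δq' t))⟫) t :=
  lyapunov_derivative_general n p m s Δq s' Δq' Δθ Δθ' ΔF ΔF' hs hΔq hΔθ hΔF M M' C hM hM_symm Y J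
    Kv Kp Ld P lam hKv_symm hKp_symm hLd_symm hLd_pd hP_symm hP_pd hskew hclosed hθ_law hF_law V hV
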